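/- arXiv:2201.00176 — 3 statements merged into one kernel-verified Lean document; each statement's English description precedes it below -/
import Mathlib

section
/- Let m,n ≥ 3, let Λ be the m×n torus lattice, let J^x = (J^x_p : p ∈ F) be real couplings and t > 0. For σ, τ ∈ Ω, the (τ,σ) entry of exp(t Σ_{p∈F} J^x_p X_p) equals Σ_C ∏_{p∈C} sinh(t J^x_p) · ∏_{p∈F∖C} cosh(t J^x_p), where the sum runs over all subsets C ⊆ F such that τ = (∏_{p∈C} x^p)·σ (componentwise product). Equivalently, exp(t Σ_{p∈F} J^x_p X_p) = ∏_{p∈F} (cosh(t J^x_p)·Id + sinh(t J^x_p)·X_p). -/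
open scoped BigOperators

namespace Toric

/-- Vertices of the `m × n` torus lattice. Faces are also indexed by `Vtx`
(the face `p` is the unit square whose lower-left corner is `p`). -/
abbrev Vtx (m n : ℕ) := ZMod m × ZMod n

/-- Edges of the torus: `(s, true)` is the horizontal edge from `s` to its right
neighbour, `(s, false)` the vertical edge from `s` to its upper neighbour. -/
abbrev Edge (m n : ℕ) := Vtx m n × Bool

variable (m n : ℕ)

/-- The four edges incident to the vertex `s`, in a fixed order:
right, up, left, down. -/
def star (s : Vtx m n) : Fin 4 → Edge m n :=
  ![(s, true), (s, false), ((s.1 - 1, s.2), true), ((s.1, s.2 - 1), false)]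

/-- The four edges bounding the face `p`, in a fixed order:
bottom, left, top, right. -/
def faceEdge (p : Vtx m n) : Fin 4 → Edge m n :=
  ![(p, true), (p, false), ((p.1, p.2 + 1), true), ((p.1 + 1, p.2), false)]

/-- The set of the four edges incident to the vertex `s` (written `e ∼ s`). -/
def starSet (s : Vtx m n) : Finset (Edge m n) := Finset.univ.image (star m n s)

/-- The set of the four edges bounding the face `p` (written `e ∼ p`). -/
def faceSet (p : Vtx m n) : Finset (Edge m n) := Finset.univ.image (faceEdge m n p)

/-- Arrow configurations: each edge points right/up (`true`) or left/down (`false`). -/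
abbrev AConf (m n : ℕ) := Edge m n → Bool

/-- Which of the four edges at `s` are incoming (point towards `s`). -/
def incVec (d : AConf m n) (s : Vtx m n) : Fin 4 → Bool :=
  ![!d (star m n s 0), !d (star m n s 1), d (star m n s 2), d (star m n s 3)]

/-- Eight-vertex condition: every vertex has an even number of incoming arrows. -/
def IsEightVertex (d : AConf m n) : Prop :=
  ∀ s : Vtx m n, Even (Finset.univ.filter (fun i => incVec m n d s i = true)).card

/-- A local vertex type `η : Fin 4 → Bool` (arrow directions of the four incident
edges, in the order right, up, left, down) is one of the eight allowed vertex types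
I–VIII iff the number of incoming arrows is even. -/
def IsVertexType (η : Fin 4 → Bool) : Prop :=
  Even (Finset.univ.filter
    (fun i => (![!η 0, !η 1, η 2, η 3] : Fin 4 → Bool) i = true)).card

/-- The event `A^η_C` that every vertex of `C` exhibits the type `η` or its
total reversal. -/
def EventA (η : Fin 4 → Bool) (C : Finset (Vtx m n)) (d : AConf m n) : Prop :=
  ∀ s ∈ C, (∀ i, d (star m n s i) = η i) ∨ (∀ i, d (star m n s i) = !η i)

/-- The event `A^{η,ν}_C` that every vertex of `C` exhibits the type `η` or `ν`
or one of their total reversals. -/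
def EventA2 (η ν : Fin 4 → Bool) (C : Finset (Vtx m n)) (d : AConf m n) : Prop :=
  ∀ s ∈ C, (∀ i, d (star m n s i) = η i) ∨ (∀ i, d (star m n s i) = !η i) ∨
    (∀ i, d (star m n s i) = ν i) ∨ (∀ i, d (star m n s i) = !ν i)

/-- A non-contractible cycle of vertices of `C`: a cyclic sequence of vertices of `C`
whose consecutive vertices are nearest neighbours on the torus (with the actual
`ℤ²`-valued unit steps recorded), and whose winding number (the total displacement
in `ℤ²`) is nonzero. -/
structure NCCycle (C : Set (Vtx m n)) where
  len : ℕ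
  len_pos : 0 < len
  v : ℕ → Vtx m n
  step : ℕ → ℤ × ℤ
  mem : ∀ i < len, v i ∈ C
  unit : ∀ i < len,
    step i = (1, 0) ∨ step i = (-1, 0) ∨ step i = (0, 1) ∨ step i = (0, -1)
  succ : ∀ i < len,
    v (i + 1) = ((v i).1 + ((step i).1 : ZMod m), (v i).2 + ((step i).2 : ZMod n))
  closed : v len = v 0
  winding : ∑ i ∈ Finset.range len, step i ≠ 0

/-- Hypothesis (★): either `C` contains no non-contractible cycle, or every
non-contractible cycle in `C` has even length. -/
def StarHyp (C : Set (Vtx m n)) : Prop :=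
  IsEmpty (NCCycle m n C) ∨ ∀ γ : NCCycle m n C, Even γ.len

section torusProb
variable [NeZero m] [NeZero n]

/-- The set `Δ_8vx` of eight-vertex configurations on the torus. -/
noncomputable def Δ8 : Finset (AConf m n) :=
  haveI := Classical.decPred (IsEightVertex m n)
  Finset.univ.filter (IsEightVertex m n)

/-- The uniform eight-vertex probability measure `μ`. -/
noncomputable def prob (P : AConf m n → Prop) : ℝ :=
  haveI := Classical.decPred P
  (((Δ8 m n).filter P).card : ℝ) / ((Δ8 m n).card : ℝ)

end torusProb

/-- Spin configurations `Ω = {-1,+1}^E`. -/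
abbrev SConf (m n : ℕ) := Edge m n → ℤˣ

section matrices
variable [NeZero m] [NeZero n]

/-- Real matrices indexed by the spin configurations (i.e. operators expressed in
the `σ³` product basis). -/
abbrev Mat (m n : ℕ) [NeZero m] [NeZero n] := Matrix (SConf m n) (SConf m n) ℝ

/-- The spin configuration `x^p`, equal to `-1` exactly on the edges of the face `p`. -/
def xconf (p : Vtx m n) : SConf m n := fun e => if e ∈ faceSet m n p then -1 else 1

/-- The spin configuration equal to `-1` exactly on the edges of a set `A`. -/
def aconf (A : Finset (Edge m n)) : SConf m n := fun e => if e ∈ A then -1 else 1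

/-- The plaquette operator `X_p = ∏_{e ∼ p} σ¹_e`: the permutation matrix flipping
the spins on the four edges of `p`. -/
def X (p : Vtx m n) : Mat m n := fun τ ω => if τ = xconf m n p * ω then 1 else 0

/-- `X_A = ∏_{e ∈ A} σ¹_e`: the permutation matrix flipping the spins on `A`. -/
def XA (A : Finset (Edge m n)) : Mat m n := fun τ ω => if τ = aconf m n A * ω then 1 else 0

/-- The product `∏_{p ∈ C} X_p` of plaquette operators: the permutation matrix
flipping the spins around all faces of `C`. -/
def XProd (C : Finset (Vtx m n)) : Mat m n :=
  fun τ ω => if τ = (∏ p ∈ C, xconf m n p) * ω then 1 else 0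

/-- The star operator `Z_s = ∏_{e ∼ s} σ³_e` (a diagonal matrix). -/
def Z (s : Vtx m n) : Mat m n :=
  Matrix.diagonal fun ω => (((∏ e ∈ starSet m n s, ω e : ℤˣ) : ℤ) : ℝ)

/-- `Z_A = ∏_{e ∈ A} σ³_e` (a diagonal matrix). -/
def ZA (A : Finset (Edge m n)) : Mat m n :=
  Matrix.diagonal fun ω => (((∏ e ∈ A, ω e : ℤˣ) : ℤ) : ℝ)

/-- The product `∏_{s ∈ D} Z_s` of star operators (a diagonal matrix). -/
def ZProd (D : Finset (Vtx m n)) : Mat m n :=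
  Matrix.diagonal fun ω => (((∏ s ∈ D, ∏ e ∈ starSet m n s, ω e : ℤˣ) : ℤ) : ℝ)

/-- The toric code Hamiltonian `H = -∑_p Jˣ_p X_p - ∑_s Jᶻ_s Z_s`. -/
noncomputable def H (Jx Jz : Vtx m n → ℝ) : Mat m n :=
  -∑ p : Vtx m n, Jx p • X m n p - ∑ s : Vtx m n, Jz s • Z m n s

/-- Matrix exponential. -/
noncomputable def mexp (A : Mat m n) : Mat m n := NormedSpace.exp A

/-- The equilibrium state `⟨A⟩ = tr(A e^{-H}) / tr(e^{-H})`. -/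
noncomputable def gibbs (Jx Jz : Vtx m n → ℝ) (A : Mat m n) : ℝ :=
  (A * mexp m n (-H m n Jx Jz)).trace / (mexp m n (-H m n Jx Jz)).trace

end matrices

/-- The scalar `I^ε_s(σ) = (1/16) ∏_{i=1}^4 (1 + ε_i σ_i(s))`. -/
noncomputable def Ifun (ε : Fin 4 → ℤˣ) (s : Vtx m n) (σ : SConf m n) : ℝ :=
  (1 / 16 : ℝ) * ∏ i : Fin 4, (1 + ((ε i : ℤ) : ℝ) * ((σ (star m n s i) : ℤ) : ℝ))

/-- The scalar `Ī^ε_s(σ) = (1/16) ∏_{i=1}^4 (1 - ε_i σ_i(s))`. -/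
noncomputable def Ibar (ε : Fin 4 → ℤˣ) (s : Vtx m n) (σ : SConf m n) : ℝ :=
  (1 / 16 : ℝ) * ∏ i : Fin 4, (1 - ((ε i : ℤ) : ℝ) * ((σ (star m n s i) : ℤ) : ℝ))

/-- `I^ε_C(σ) = ∏_{s ∈ C} (I^ε_s(σ) + Ī^ε_s(σ))`: the indicator that around every
vertex of `C` the spins all agree with `ε` or are all opposite. -/
noncomputable def IC (ε : Fin 4 → ℤˣ) (C : Finset (Vtx m n)) (σ : SConf m n) : ℝ :=
  ∏ s ∈ C, (Ifun m n ε s σ + Ibar m n ε s σ)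

/-- `I^{ε,δ}_C(σ) = ∏_{s ∈ C} (I^ε_s(σ) + Ī^ε_s(σ) + I^δ_s(σ) + Ī^δ_s(σ))`. -/
noncomputable def IC2 (ε δ : Fin 4 → ℤˣ) (C : Finset (Vtx m n)) (σ : SConf m n) : ℝ :=
  ∏ s ∈ C, (Ifun m n ε s σ + Ibar m n ε s σ + Ifun m n δ s σ + Ibar m n δ s σ)

section matrices2
variable [NeZero m] [NeZero n]

/-- The (diagonal) operator `Q^ε_C = ∏_{s ∈ C} (P^ε_s + P̄^ε_s)`, where
`P^ε_s = (1/16) ∏_i (1 + ε_i σ³_i(s))` and `P̄^ε_s = (1/16) ∏_i (1 - ε_i σ³_i(s))`. -/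
noncomputable def Q (ε : Fin 4 → ℤˣ) (C : Finset (Vtx m n)) : Mat m n :=
  Matrix.diagonal (IC m n ε C)

/-- The (diagonal) operator `Q^{ε,δ}_C = ∏_{s ∈ C} (P^ε_s + P̄^ε_s + P^δ_s + P̄^δ_s)`. -/
noncomputable def Q2 (ε δ : Fin 4 → ℤˣ) (C : Finset (Vtx m n)) : Mat m n :=
  Matrix.diagonal (IC2 m n ε δ C)

/-- Expectation `E_J[f]` under the four-body Ising measure
`P_J(σ) ∝ exp(∑_s J_s ∏_{e ∼ s} σ_e)`. -/
noncomputable def isingE (J : Vtx m n → ℝ) (f : SConf m n → ℝ) : ℝ :=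
  (∑ σ : SConf m n, f σ *
      Real.exp (∑ s : Vtx m n, J s * (((∏ e ∈ starSet m n s, σ e : ℤˣ) : ℤ) : ℝ))) /
    (∑ σ : SConf m n,
      Real.exp (∑ s : Vtx m n, J s * (((∏ e ∈ starSet m n s, σ e : ℤˣ) : ℤ) : ℝ)))

end matrices2

end Toric

/-!
Since `X_p² = 1`, `exp (c X_p) = cosh c + sinh c · X_p`, as the even and odd parts of the
exponential series. The `X_p` are the images of the elements `x^p` of the commutative group `Ω`
under its regular representation, so they commute: the exponential of the sum is the product of
these factors, and expanding that product over subsets `C ⊆ F` is done in the commutative group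
algebra `ℝ[Ω]`, where `∏_{p ∈ C} X_p` becomes the single translation by `∏_{p ∈ C} x^p`.
-/

open NormedSpace Finset

section BanachAlgebra

variable {𝔸 : Type*} [NormedRing 𝔸] [NormedAlgebra ℝ 𝔸] [CompleteSpace 𝔸]

theorem exp_smul_of_mul_self_eq_one {a : 𝔸} (ha : a * a = 1) (c : ℝ) :
    exp (c • a) = Real.cosh c • 1 + Real.sinh c • a := by
  have ha_even (k : ℕ) : a ^ (2 * k) = 1 := by rw [pow_mul, sq, ha, one_pow]
  refine (exp_series_hasSum_exp' (𝕂 := ℝ) (c • a)).unique (HasSum.even_add_odd ?_ ?_)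
  · convert (Real.hasSum_cosh c).smul_const (1 : 𝔸) using 2 with k
    rw [smul_pow, ha_even, smul_smul, div_eq_inv_mul]
  · convert (Real.hasSum_sinh c).smul_const a using 2 with k
    rw [smul_pow, pow_succ a, ha_even, one_mul, smul_smul, div_eq_inv_mul]

open MonoidAlgebra

variable {G ι : Type*} [CommMonoid G] (ρ : G →* 𝔸) (g : ι → G) (c : ι → ℝ)

theorem exp_sum_smul_eq_lift_prod (hg : ∀ i, g i * g i = 1) (s : Finset ι) :
    exp (∑ i ∈ s, c i • ρ (g i)) =
      lift ℝ 𝔸 G ρ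
        (∏ i ∈ s, (single (g i) (Real.sinh (c i)) + single 1 (Real.cosh (c i)))) := by
  classical
  let +nondep : NormedAlgebra ℚ 𝔸 := .restrictScalars ℚ ℝ 𝔸
  induction s using Finset.induction_on with
  | empty => simp
  | insert j s hj ih =>
    have hcomm : Commute (c j • ρ (g j)) (∑ i ∈ s, c i • ρ (g i)) :=
      Commute.sum_right _ _ _ fun i _ => (((Commute.all _ _).map ρ).smul_left _).smul_right _
    have hρ : ρ (g j) * ρ (g j) = 1 := by rw [← map_mul, hg, map_one]
    rw [sum_insert hj, exp_add_of_commute hcomm, ih, prod_insert hj, map_mul, map_add,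
      lift_single, lift_single, map_one, add_comm (_ • ρ (g j)), exp_smul_of_mul_self_eq_one hρ]

theorem exp_sum_smul_eq_sum_powerset [DecidableEq ι] (hg : ∀ i, g i * g i = 1) (s : Finset ι) :
    exp (∑ i ∈ s, c i • ρ (g i)) =
      ∑ t ∈ s.powerset,
        ((∏ i ∈ t, Real.sinh (c i)) * ∏ i ∈ s \ t, Real.cosh (c i)) •
          ρ (∏ i ∈ t, g i) := by
  rw [exp_sum_smul_eq_lift_prod ρ g c hg]
  simp_rw [prod_add, prod_single, single_mul_single, prod_const_one, mul_one, map_sum, lift_single]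

end BanachAlgebra

section TranslationMatrix

variable (R : Type*) {G : Type*} [Semiring R] [Monoid G] [Fintype G] [DecidableEq G]

def translationMatrix : G →* Matrix G G R where
  toFun u := Matrix.of fun τ ω => if τ = u * ω then 1 else 0
  map_one' := by ext τ ω; simp [Matrix.one_apply]
  map_mul' u v := by
    ext τ ω
    rw [Matrix.mul_apply, sum_eq_single (v * ω) (fun b _ hb => by simp [hb]) (by simp)]
    simp [mul_assoc]

end TranslationMatrix

theorem Toric.xconf_mul_self (m n : ℕ) [NeZero m] [NeZero n] (p : Toric.Vtx m n) :
    Toric.xconf m n p * Toric.xconf m n p = 1 :=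
  funext fun _ => Int.units_mul_self _

theorem exp_X_entries_general (m n : ℕ) [NeZero m] [NeZero n]
    (Jx : Toric.Vtx m n → ℝ) (t : ℝ) (σ τ : Toric.SConf m n) :
    Toric.mexp m n (t • ∑ p : Toric.Vtx m n, Jx p • Toric.X m n p) τ σ =
      ∑ C : Finset (Toric.Vtx m n),
        if τ = (∏ p ∈ C, Toric.xconf m n p) * σ then
          (∏ p ∈ C, Real.sinh (t * Jx p)) * ∏ p ∈ Cᶜ, Real.cosh (t * Jx p)
        else 0 := by
  have hX : t • ∑ p, Jx p • Toric.X m n p =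
      ∑ p, (t * Jx p) • translationMatrix ℝ (Toric.xconf m n p) := by
    simp_rw [smul_sum, smul_smul]
    rfl
  -- matrices carry no default norm: `linftyOp` makes them a Banach algebra, and `erw` matches
  -- `exp` across the two instance paths
  let := Matrix.linftyOpNormedRing (n := Toric.SConf m n) (α := ℝ)
  let := Matrix.linftyOpNormedAlgebra (n := Toric.SConf m n) (R := ℝ) (α := ℝ)
  erw [Toric.mexp, hX, exp_sum_smul_eq_sum_powerset _ _ _ (Toric.xconf_mul_self m n)]
  rw [powerset_univ, Matrix.sum_apply]
  refine sum_congr rfl fun C _ => ?_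
  simp [translationMatrix, compl_eq_univ_sdiff]

/-- Entrywise formula for `exp(t ∑_p Jˣ_p X_p)`: the `(τ,σ)` entry is
`∑_{C ⊆ F, τ = (∏_{p∈C} x^p)·σ} ∏_{p∈C} sinh(t Jˣ_p) ∏_{p∉C} cosh(t Jˣ_p)`. -/
theorem exp_X_entries (m n : ℕ) [NeZero m] [NeZero n]
    (hm : 3 ≤ m) (hn : 3 ≤ n)
    (Jx : Toric.Vtx m n → ℝ) (t : ℝ) (ht : 0 < t) (σ τ : Toric.SConf m n) :
    Toric.mexp m n (t • ∑ p : Toric.Vtx m n, Jx p • Toric.X m n p) τ σ =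
      ∑ C : Finset (Toric.Vtx m n),
        if τ = (∏ p ∈ C, Toric.xconf m n p) * σ then
          (∏ p ∈ C, Real.sinh (t * Jx p)) * ∏ p ∈ Cᶜ, Real.cosh (t * Jx p)
        else 0 :=
  exp_X_entries_general m n Jx t σ τ
end

section
/- Let m,n ≥ 3, let Λ be the m×n torus lattice, and let J^x = (J^x_p ≥ 0 : p ∈ F), J^z = (J^z_s ≥ 0 : s ∈ V) be nonnegative couplings. Then the toric code partition function satisfies tr(exp(−H)) = 2^{|E|} · (∏_{s∈V} cosh(J^z_s) + ∏_{s∈V} sinh(J^z_s)) · (∏_{p∈F} cosh(J^x_p) + ∏_{p∈F} sinh(J^x_p)). -/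
open scoped BigOperators

/-!
The star operators `Z_s` are diagonal, and each plaquette flip `xᵖ` changes an even number of
spins around every star, so `X_p` and `Z_s` commute and
`exp(-H) = exp(∑ Jˣ_p X_p) · exp(∑ Jᶻ_s Z_s)`.

The `X_p` are commuting involutions, so
`exp(∑ Jˣ_p X_p) = ∑_T (∏_{T} sinh Jˣ_p ∏_{F∖T} cosh Jˣ_p) X_T` with `X_T` the permutation
matrix of the flip `∏_{p ∈ T} xᵖ`; its diagonal vanishes unless that flip is trivial, i.e.
unless `T = ∅` or `T = F`. The second factor is diagonal with entries
`∏_s (cosh Jᶻ_s + Z_s(ω) sinh Jᶻ_s)`; expanding and summing over `ω`, the character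
`ω ↦ ∏_{s ∈ B} Z_s(ω)` sums to `0` unless it is trivial, i.e. unless `B = ∅` or `B = V`, where it
sums to `2^{|E|}`. Both triviality criteria reduce to the fact that a set of vertices invariant
under the two unit translations of the torus is empty or everything.
-/

open Finset NormedSpace Real

theorem NormedSpace.exp_smul_eq_cosh_add_sinh {𝔸 : Type*} [Ring 𝔸] [Algebra ℝ 𝔸]
    [TopologicalSpace 𝔸] [IsTopologicalRing 𝔸] [ContinuousSMul ℝ 𝔸] [T2Space 𝔸]
    {A : 𝔸} (hA : A * A = 1) (c : ℝ) :
    exp (c • A) = cosh c • (1 : 𝔸) + sinh c • A := by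
  have hpow (k : ℕ) : A ^ (2 * k) = 1 := by rw [pow_mul, sq, hA, one_pow]
  rw [exp_eq_tsum ℝ]
  refine HasSum.tsum_eq (HasSum.even_add_odd ?_ ?_)
  · convert (hasSum_cosh c).smul_const (1 : 𝔸) using 2 with k
    rw [smul_pow, hpow, smul_smul, div_eq_inv_mul]
  · convert (hasSum_sinh c).smul_const A using 2 with k
    rw [smul_pow, pow_succ A, hpow, one_mul, smul_smul, div_eq_inv_mul]

theorem Matrix.exp_sum_smul_monoidHom {ι κ G : Type*} [DecidableEq ι] [Fintype κ]
    [DecidableEq κ] [CommMonoid G] (ρ : G →* Matrix κ κ ℝ) (g : ι → G) (c : ι → ℝ)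
    (s : Finset ι) (hg : ∀ i ∈ s, ρ (g i) * ρ (g i) = 1) :
    exp (∑ i ∈ s, c i • ρ (g i)) =
      ∑ T ∈ s.powerset, ((∏ i ∈ T, sinh (c i)) * ∏ i ∈ s \ T, cosh (c i)) • ρ (∏ i ∈ T, g i) := by
  induction s using Finset.induction_on with
  | empty => simp
  | @insert q s hq ih =>
    have hcomm : Commute (c q • ρ (g q)) (∑ i ∈ s, c i • ρ (g i)) :=
      Commute.sum_right _ _ _ fun i _ =>
        ((Commute.map (Commute.all (g q) (g i)) ρ).smul_right _).smul_left _
    rw [sum_insert hq, Matrix.exp_add_of_commute _ _ hcomm,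
      exp_smul_eq_cosh_add_sinh (hg q (mem_insert_self q s)),
      ih fun i hi => hg i (mem_insert_of_mem hi), sum_powerset_insert hq, add_mul, mul_sum,
      mul_sum]
    congr 1 <;> refine sum_congr rfl fun T hT => ?_ <;>
      have hqT : q ∉ T := fun h => hq (mem_powerset.mp hT h)
    · rw [insert_sdiff_of_notMem _ hqT, prod_insert (fun h => hq (mem_sdiff.mp h).1),
        smul_mul_assoc, one_mul, smul_smul]
      congr 1
      ring
    · rw [insert_sdiff_insert, sdiff_insert_of_notMem hq, prod_insert hqT, prod_insert hqT,
        map_mul, smul_mul_smul_comm]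
      congr 1
      ring

namespace Matrix

variable {G R : Type*} [Group G] [Fintype G] [DecidableEq G] [CommSemiring R]

variable (R) in
def leftRegular : G →* Matrix G G R where
  toFun g := of fun τ ω => if τ = g * ω then 1 else 0
  map_one' := by ext τ ω; simp [one_apply]
  map_mul' g h := by
    ext τ ω
    rw [mul_apply, of_apply, sum_eq_single (h * ω) (fun ρ _ hρ => by simp [hρ]) (by simp)]
    simp [mul_assoc]

theorem leftRegular_apply (g τ ω : G) :
    leftRegular R g τ ω = if τ = g * ω then 1 else 0 := rfl

theorem leftRegular_apply_self (g ω : G) :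
    leftRegular R g ω ω = if g = 1 then 1 else 0 := by
  simp [leftRegular_apply]

theorem commute_leftRegular_diagonal {g : G} {d : G → R} (hd : ∀ ω, d (g * ω) = d ω) :
    Commute (leftRegular R g) (diagonal d) := by
  ext τ ω
  rw [mul_diagonal, diagonal_mul, leftRegular_apply]
  split_ifs with h
  · rw [h, hd, mul_one, one_mul]
  · rw [mul_zero, zero_mul]

theorem trace_leftRegular_mul_diagonal (g : G) (d : G → R) :
    (leftRegular R g * diagonal d).trace = if g = 1 then ∑ ω, d ω else 0 := by
  simp only [trace, diag, mul_diagonal, leftRegular_apply_self]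
  split_ifs <;> simp

end Matrix

theorem ite_neg_one_mul_ite_neg_one_eq_one_iff {P Q : Prop} [Decidable P] [Decidable Q] :
    (if P then (-1 : ℤˣ) else 1) * (if Q then -1 else 1) = 1 ↔ (P ↔ Q) := by
  by_cases P <;> by_cases Q <;> simp [*]

theorem Finset.prod_ite_eq_or_eq {α M : Type*} [DecidableEq α] [CommMonoid M] (B : Finset α)
    {a b : α} (hab : a ≠ b) (c : M) :
    ∏ s ∈ B, (if s = a ∨ s = b then c else 1) =
      (if a ∈ B then c else 1) * (if b ∈ B then c else 1) := by
  rw [← prod_ite_eq' B a fun _ => c, ← prod_ite_eq' B b fun _ => c, ← prod_mul_distrib]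
  refine prod_congr rfl fun s _ => ?_
  rcases eq_or_ne s a with rfl | hsa
  · simp [hab]
  rcases eq_or_ne s b with rfl | hsb
  · simp [hsa]
  · simp [hsa, hsb]

theorem Finset.sum_powerset_ite_eq_empty_or_univ {ι M : Type*} [Fintype ι] [Nonempty ι]
    [DecidableEq ι] [AddCommMonoid M] (f : Finset ι → M) :
    ∑ T ∈ univ.powerset, (if T = ∅ ∨ T = univ then f T else 0) = f ∅ + f univ := by
  rw [sum_ite, sum_const_zero, add_zero,
    show univ.powerset.filter (fun T : Finset ι => T = ∅ ∨ T = univ) = {∅, univ} by ext; simp,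
    sum_pair univ_nonempty.ne_empty.symm]

namespace Toric

variable {m n : ℕ}

def unitStep : Bool → Vtx m n
  | true => (1, 0)
  | false => (0, 1)

theorem mem_starSet_iff {s v : Vtx m n} {b : Bool} :
    (v, b) ∈ starSet m n s ↔ s = v ∨ s = v + unitStep b := by
  simp only [starSet, star, mem_image, mem_univ, true_and, Fin.exists_fin_succ]
  cases b <;> obtain ⟨v1, v2⟩ := v <;> obtain ⟨s1, s2⟩ := s <;>
    simp [unitStep, sub_eq_iff_eq_add]

theorem mem_faceSet_iff {p v : Vtx m n} {b : Bool} :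
    (v, b) ∈ faceSet m n p ↔ p = v ∨ p = v - unitStep !b := by
  simp only [faceSet, faceEdge, mem_image, mem_univ, true_and, Fin.exists_fin_succ]
  cases b <;> obtain ⟨v1, v2⟩ := v <;> obtain ⟨p1, p2⟩ := p <;>
    simp [unitStep, eq_sub_iff_add_eq]

def starChar (B : Finset (Vtx m n)) : SConf m n →* ℤˣ where
  toFun ω := ∏ s ∈ B, ∏ e ∈ starSet m n s, ω e
  map_one' := by simp
  map_mul' ω ω' := by simp [prod_mul_distrib]

theorem starChar_apply (B : Finset (Vtx m n)) (ω : SConf m n) :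
    starChar B ω = ∏ s ∈ B, ∏ e ∈ starSet m n s, ω e := rfl

theorem sconf_mul_self (ω : SConf m n) : ω * ω = 1 :=
  funext fun e => Int.units_mul_self (ω e)

theorem xconf_eq_prod_mulSingle (p : Vtx m n) :
    xconf m n p = ∏ e ∈ faceSet m n p, Pi.mulSingle e (-1) := by
  ext1 e
  simp [xconf, prod_apply]

section Nontrivial

variable [Fact (1 < m)] [Fact (1 < n)]

theorem unitStep_ne_zero (b : Bool) : (unitStep b : Vtx m n) ≠ 0 := by
  cases b <;> simp [unitStep]

theorem starChar_mulSingle (B : Finset (Vtx m n)) (v : Vtx m n) (b : Bool) :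
    starChar B (Pi.mulSingle (v, b) (-1)) =
      (if v ∈ B then -1 else 1) * (if v + unitStep b ∈ B then -1 else 1) := by
  simp only [starChar_apply, prod_pi_mulSingle', mem_starSet_iff]
  exact prod_ite_eq_or_eq B (add_ne_left.mpr (unitStep_ne_zero b)).symm _

theorem prod_xconf_apply (T : Finset (Vtx m n)) (v : Vtx m n) (b : Bool) :
    (∏ p ∈ T, xconf m n p) (v, b) =
      (if v ∈ T then -1 else 1) * (if v - unitStep (!b) ∈ T then -1 else 1) := by
  simp only [prod_apply, xconf, mem_faceSet_iff]
  exact prod_ite_eq_or_eq T (fun h => unitStep_ne_zero _ (sub_eq_self.mp h.symm)) _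

theorem faceEdge_injective (p : Vtx m n) : Function.Injective (faceEdge m n p) := by
  intro i j h
  fin_cases i <;> fin_cases j <;> simp_all [faceEdge, Prod.ext_iff]

theorem starChar_xconf (B : Finset (Vtx m n)) (p : Vtx m n) : starChar B (xconf m n p) = 1 := by
  rw [xconf_eq_prod_mulSingle, map_prod, faceSet,
    prod_image fun i _ j _ h => faceEdge_injective p h, Fin.prod_univ_four]
  obtain ⟨a, b⟩ := p
  simp only [faceEdge, Matrix.cons_val, starChar_mulSingle, unitStep, Prod.mk_add_mk, add_zero]
  -- each corner of the face is an endpoint of exactly two of its edges, so each sign occurs twice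
  split_ifs <;> rfl

end Nontrivial

variable [NeZero m] [NeZero n]

theorem forall_mem_iff_add_unitStep_mem_iff {B : Finset (Vtx m n)} :
    (∀ v b, v ∈ B ↔ v + unitStep b ∈ B) ↔ B = ∅ ∨ B = univ := by
  refine ⟨fun hB => ?_, by rintro (rfl | rfl) <;> simp⟩
  rcases B.eq_empty_or_nonempty with h | ⟨a, ha⟩
  · exact Or.inl h
  have hshift (b : Bool) (k : ℕ) (v : Vtx m n) (hv : v ∈ B) : v + k • unitStep b ∈ B := by
    induction k with
    | zero => simpa
    | succ k ih => rw [succ_nsmul, ← add_assoc]; exact (hB _ b).mp ih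
  refine Or.inr (eq_univ_of_forall fun t => ?_)
  have ht : t = a + (t - a).1.val • unitStep true + (t - a).2.val • unitStep false := by
    ext <;> simp [unitStep]
  rw [ht]
  exact hshift _ _ _ (hshift _ _ _ ha)

theorem card_sconf : Fintype.card (SConf m n) = 2 ^ (2 * m * n) := by
  rw [Fintype.card_fun, Fintype.card_units_int, Fintype.card_prod, Fintype.card_prod,
    ZMod.card, ZMod.card, Fintype.card_bool]
  ring

theorem X_eq_leftRegular (p : Vtx m n) : X m n p = Matrix.leftRegular ℝ (xconf m n p) := rfl

theorem neg_H_eq_add_diagonal (Jx Jz : Vtx m n → ℝ) :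
    -H m n Jx Jz = ∑ p, Jx p • X m n p +
      Matrix.diagonal fun ω => ∑ s, Jz s * (((∏ e ∈ starSet m n s, ω e : ℤˣ) : ℤ) : ℝ) := by
  have hZ : ∑ s, Jz s • Z m n s =
      Matrix.diagonal fun ω => ∑ s, Jz s * (((∏ e ∈ starSet m n s, ω e : ℤˣ) : ℤ) : ℝ) := by
    ext τ ω
    rw [Matrix.sum_apply, Matrix.diagonal_apply]
    split_ifs with h <;> simp [Z, h]
  rw [H, ← hZ, neg_sub, sub_neg_eq_add, add_comm]

variable [Fact (1 < m)] [Fact (1 < n)]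

theorem starChar_eq_one_iff (B : Finset (Vtx m n)) : starChar B = 1 ↔ B = ∅ ∨ B = univ := by
  rw [← forall_mem_iff_add_unitStep_mem_iff]
  constructor
  · intro h v b
    rw [← ite_neg_one_mul_ite_neg_one_eq_one_iff, ← starChar_mulSingle, h, MonoidHom.one_apply]
  · intro h
    refine MonoidHom.functions_ext _ _ _ fun e u => ?_
    rcases Int.units_eq_one_or u with rfl | rfl
    · simp
    · rw [starChar_mulSingle, ite_neg_one_mul_ite_neg_one_eq_one_iff.mpr (h _ _)]
      rfl

theorem prod_xconf_eq_one_iff (T : Finset (Vtx m n)) :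
    ∏ p ∈ T, xconf m n p = 1 ↔ T = ∅ ∨ T = univ := by
  rw [← forall_mem_iff_add_unitStep_mem_iff, funext_iff, Prod.forall]
  simp only [prod_xconf_apply, Pi.one_apply, ite_neg_one_mul_ite_neg_one_eq_one_iff]
  constructor
  · intro h v b
    rw [h (v + unitStep b) (!b), Bool.not_not, add_sub_cancel_right, Iff.comm]
  · intro h v b
    rw [h (v - unitStep (!b)) (!b), sub_add_cancel]

theorem sum_starChar (B : Finset (Vtx m n)) :
    ∑ ω : SConf m n, ((starChar B ω : ℤ) : ℝ) =
      if B = ∅ ∨ B = univ then 2 ^ (2 * m * n) else 0 := by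
  classical
  let χ : SConf m n →* ℝ :=
    ((Int.castRingHom ℝ : ℤ →* ℝ).comp (Units.coeHom ℤ)).comp (starChar B)
  have hχ : χ = 1 ↔ starChar B = 1 := by
    refine ⟨fun h => MonoidHom.ext fun ω => Units.ext ?_, fun h => by simp [χ, h]⟩
    simpa [χ] using DFunLike.congr_fun h ω
  calc ∑ ω : SConf m n, ((starChar B ω : ℤ) : ℝ) = ∑ ω, χ ω := rfl
    _ = _ := by simp only [sum_hom_units, hχ, starChar_eq_one_iff, card_sconf]; push_cast; rfl

theorem sum_exp_sum_mul_prod_starSet (J : Vtx m n → ℝ) :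
    ∑ ω : SConf m n, Real.exp (∑ s, J s * (((∏ e ∈ starSet m n s, ω e : ℤˣ) : ℤ) : ℝ)) =
      2 ^ (2 * m * n) * ((∏ s, cosh (J s)) + ∏ s, sinh (J s)) := by
  have hexp (c : ℝ) (u : ℤˣ) : Real.exp (c * ((u : ℤ) : ℝ)) = u * sinh c + cosh c := by
    rcases Int.units_eq_one_or u with rfl | rfl
    · simp [← cosh_add_sinh, add_comm]
    · simp [← cosh_sub_sinh, sub_eq_neg_add]
  calc ∑ ω : SConf m n, Real.exp (∑ s, J s * (((∏ e ∈ starSet m n s, ω e : ℤˣ) : ℤ) : ℝ))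
      = ∑ ω : SConf m n, ∑ B ∈ univ.powerset,
          ((starChar B ω : ℤ) : ℝ) * ((∏ s ∈ B, sinh (J s)) * ∏ s ∈ univ \ B, cosh (J s)) := by
        refine sum_congr rfl fun ω _ => ?_
        simp only [Real.exp_sum, hexp, prod_add, prod_mul_distrib, starChar_apply]
        push_cast
        simp only [mul_assoc]
    _ = ∑ B ∈ univ.powerset, if B = ∅ ∨ B = univ then
          2 ^ (2 * m * n) * ((∏ s ∈ B, sinh (J s)) * ∏ s ∈ univ \ B, cosh (J s)) else 0 := by
        rw [sum_comm]
        refine sum_congr rfl fun B _ => ?_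
        rw [← sum_mul, sum_starChar, ite_mul, zero_mul]
    _ = 2 ^ (2 * m * n) * ((∏ s, cosh (J s)) + ∏ s, sinh (J s)) := by
        rw [sum_powerset_ite_eq_empty_or_univ]
        simp [mul_add]

theorem commute_sum_smul_X_diagonal (Jx Jz : Vtx m n → ℝ) :
    Commute (∑ p, Jx p • X m n p)
      (Matrix.diagonal fun ω => ∑ s, Jz s * (((∏ e ∈ starSet m n s, ω e : ℤˣ) : ℤ) : ℝ)) := by
  refine Commute.sum_left _ _ _ fun p _ => Commute.smul_left ?_ _
  refine Matrix.commute_leftRegular_diagonal fun ω => ?_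
  have h (s : Vtx m n) := congrArg (fun u : ℤˣ => ((u : ℤ) : ℝ)) (starChar_xconf {s} p)
  simp only [starChar_apply, prod_singleton, Pi.mul_apply, prod_mul_distrib] at h ⊢
  push_cast at h ⊢
  simp [h]

theorem trace_exp_sum_smul_X_mul_diagonal (J : Vtx m n → ℝ) (d : SConf m n → ℝ) :
    (exp (∑ p, J p • X m n p) * Matrix.diagonal d).trace =
      ((∏ p, cosh (J p)) + ∏ p, sinh (J p)) * ∑ ω, d ω := by
  simp only [X_eq_leftRegular]
  rw [Matrix.exp_sum_smul_monoidHom _ _ _ _ fun p _ => by rw [← map_mul, sconf_mul_self, map_one],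
    sum_mul, Matrix.trace_sum]
  simp only [smul_mul_assoc, Matrix.trace_smul, Matrix.trace_leftRegular_mul_diagonal,
    prod_xconf_eq_one_iff, smul_eq_mul, mul_ite, mul_zero]
  rw [sum_powerset_ite_eq_empty_or_univ]
  simp [add_mul]

end Toric

theorem toric_code_partition_function_general (m n : ℕ) [NeZero m] [NeZero n]
    (hm : 3 ≤ m) (hn : 3 ≤ n)
    (Jx Jz : Toric.Vtx m n → ℝ) :
    (Toric.mexp m n (-Toric.H m n Jx Jz)).trace =
      2 ^ (2 * m * n) *
        ((∏ s : Toric.Vtx m n, Real.cosh (Jz s)) +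
          ∏ s : Toric.Vtx m n, Real.sinh (Jz s)) *
        ((∏ p : Toric.Vtx m n, Real.cosh (Jx p)) +
          ∏ p : Toric.Vtx m n, Real.sinh (Jx p)) := by
  have : Fact (1 < m) := ⟨by omega⟩
  have : Fact (1 < n) := ⟨by omega⟩
  rw [Toric.mexp, Toric.neg_H_eq_add_diagonal,
    Matrix.exp_add_of_commute _ _ (Toric.commute_sum_smul_X_diagonal Jx Jz), Matrix.exp_diagonal,
    Toric.trace_exp_sum_smul_X_mul_diagonal]
  simp only [Pi.coe_exp, ← Real.exp_eq_exp_ℝ, Toric.sum_exp_sum_mul_prod_starSet]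
  ring

/-- The toric code partition function:
`tr(e^{-H}) = 2^{|E|} (∏_s cosh Jᶻ_s + ∏_s sinh Jᶻ_s)(∏_p cosh Jˣ_p + ∏_p sinh Jˣ_p)`,
where `|E| = 2mn`. -/
theorem toric_code_partition_function (m n : ℕ) [NeZero m] [NeZero n]
    (hm : 3 ≤ m) (hn : 3 ≤ n)
    (Jx Jz : Toric.Vtx m n → ℝ) (hJx : ∀ p, 0 ≤ Jx p) (hJz : ∀ s, 0 ≤ Jz s) :
    (Toric.mexp m n (-Toric.H m n Jx Jz)).trace =
      2 ^ (2 * m * n) *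
        ((∏ s : Toric.Vtx m n, Real.cosh (Jz s)) +
          ∏ s : Toric.Vtx m n, Real.sinh (Jz s)) *
        ((∏ p : Toric.Vtx m n, Real.cosh (Jx p)) +
          ∏ p : Toric.Vtx m n, Real.sinh (Jx p)) :=
  toric_code_partition_function_general m n hm hn Jx Jz
end

section
/- Let m,n ≥ 3, let Λ be the m×n torus lattice, and let J^x = (J^x_p ≥ 0 : p ∈ F), J^z = (J^z_s ≥ 0 : s ∈ V) be nonnegative couplings. Let A ⊆ E and set Z_A = ∏_{e∈A} σ⁽³⁾_e. If there is no subset D ⊆ V such that A equals the symmetric difference △_{s∈D} {e ∈ E : e ∼ s} (equivalently, no D ⊆ V with Z_A = ∏_{s∈D} Z_s), then the toric code equilibrium state satisfies ⟨Z_A⟩ = 0. -/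
open scoped BigOperators

/-!
Work in `𝔽₂^E`. If the indicator of `A` lies in the span of the indicators of the stars, then
`A` is a symmetric difference of stars and `Z_A` is a product of star operators. Otherwise a
linear functional separates it from that span: a set `B` of edges meeting every star evenly and
`A` oddly. The spin flip `X_B` is an involution commuting with every `X_p` and `Z_s`, hence with
`e^{-H}`, and anticommuting with `Z_A`; conjugating by it gives
`tr(Z_A e^{-H}) = -tr(Z_A e^{-H})`.
-/

open Matrix

lemma zmod_two_eq_zero_or_one (z : ZMod 2) : z = 0 ∨ z = 1 := by
  decide +revert

lemma uzpow_sum {κ : Type*} (u : ℤˣ) (s : Finset κ) (r : κ → ZMod 2) :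
    u ^ (∑ i ∈ s, r i) = ∏ i ∈ s, u ^ r i := by
  classical
  induction s using Finset.induction_on with
  | empty => simp
  | insert i s hi ih => rw [Finset.sum_insert hi, Finset.prod_insert hi, uzpow_add, ih]

lemma exists_finset_sum_eq_of_mem_span_range {κ M : Type*} [Fintype κ] [AddCommGroup M]
    [Module (ZMod 2) M] {v : κ → M} {x : M} (hx : x ∈ Submodule.span (ZMod 2) (Set.range v)) :
    ∃ D : Finset κ, ∑ s ∈ D, v s = x := by
  classical
  obtain ⟨c, rfl⟩ := (Submodule.mem_span_range_iff_exists_fun (ZMod 2)).mp hx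
  refine ⟨Finset.univ.filter (c · = 1), ?_⟩
  rw [Finset.sum_filter]
  refine Finset.sum_congr rfl fun s _ => ?_
  rcases zmod_two_eq_zero_or_one (c s) with h | h <;> simp [h]

section Parity

variable {ι κ : Type*} [Fintype ι] [DecidableEq ι]

def indicatorMod2 (S : Finset ι) : ι → ZMod 2 := fun e => if e ∈ S then 1 else 0

lemma prod_eq_prod_uzpow_indicatorMod2 (ω : ι → ℤˣ) (S : Finset ι) :
    ∏ e ∈ S, ω e = ∏ e, ω e ^ indicatorMod2 S e := by
  simp [indicatorMod2, apply_ite, Finset.prod_ite_mem]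

lemma prod_eq_prod_prod_of_indicatorMod2_eq_sum {A : Finset ι} {T : κ → Finset ι}
    {D : Finset κ} (h : indicatorMod2 A = ∑ s ∈ D, indicatorMod2 (T s)) (ω : ι → ℤˣ) :
    ∏ e ∈ A, ω e = ∏ s ∈ D, ∏ e ∈ T s, ω e := by
  simp_rw [prod_eq_prod_uzpow_indicatorMod2 ω, h, Finset.sum_apply, uzpow_sum]
  exact Finset.prod_comm

lemma prod_neg_one_uzpow_apply_single (f : Module.Dual (ZMod 2) (ι → ZMod 2)) (S : Finset ι) :
    ∏ e ∈ S, (-1 : ℤˣ) ^ f (Pi.single e 1) = (-1) ^ f (indicatorMod2 S) := by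
  rw [LinearMap.pi_apply_eq_sum_univ f]
  simp only [indicatorMod2, ite_smul, one_smul, zero_smul, Finset.sum_ite_mem,
    Finset.univ_inter, uzpow_sum]
  refine Finset.prod_congr rfl fun e _ => ?_
  congr 3
  ext j
  simp [Pi.single_apply, eq_comm]

lemma exists_prod_eq_prod_prod_or_exists_sign_flip [Fintype κ] (A : Finset ι)
    (T : κ → Finset ι) :
    (∃ D : Finset κ, ∀ ω : ι → ℤˣ, ∏ e ∈ A, ω e = ∏ s ∈ D, ∏ e ∈ T s, ω e) ∨
      ∃ c : ι → ℤˣ, (∀ s, ∏ e ∈ T s, c e = 1) ∧ ∏ e ∈ A, c e = -1 := by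
  by_cases hA :
      indicatorMod2 A ∈ Submodule.span (ZMod 2) (Set.range fun s => indicatorMod2 (T s))
  · obtain ⟨D, hD⟩ := exists_finset_sum_eq_of_mem_span_range hA
    exact .inl ⟨D, prod_eq_prod_prod_of_indicatorMod2_eq_sum hD.symm⟩
  · obtain ⟨f, hfA, hf⟩ := Submodule.exists_dual_map_eq_bot_of_notMem hA inferInstance
    refine .inr ⟨fun e => (-1) ^ f (Pi.single e 1), fun s => ?_, ?_⟩
    · have hs : f (indicatorMod2 (T s)) = 0 := by
        rw [← Submodule.mem_bot (ZMod 2), ← hf]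
        exact Submodule.mem_map_of_mem (Submodule.subset_span (Set.mem_range_self s))
      rw [prod_neg_one_uzpow_apply_single, hs, uzpow_zero]
    · have h1 : f (indicatorMod2 A) = 1 := (zmod_two_eq_zero_or_one _).resolve_left hfA
      rw [prod_neg_one_uzpow_apply_single, h1, uzpow_one]

end Parity

section ShiftMatrix

variable {G : Type*} [Group G] [DecidableEq G] (R : Type*)

def shiftMatrix [Zero R] [One R] (c : G) : Matrix G G R :=
  Matrix.of fun τ ω => if τ = c * ω then 1 else 0

lemma shiftMatrix_one [Zero R] [One R] : shiftMatrix R (1 : G) = 1 := by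
  ext τ ω
  simp [shiftMatrix, Matrix.one_apply]

variable [Fintype G] [Semiring R]

lemma shiftMatrix_mul_shiftMatrix (c d : G) :
    shiftMatrix R c * shiftMatrix R d = shiftMatrix R (c * d) := by
  ext τ ω
  simp [shiftMatrix, Matrix.mul_apply, mul_assoc]

variable {R}

lemma diagonal_mul_shiftMatrix (f : G → R) (c : G) :
    diagonal f * shiftMatrix R c = shiftMatrix R c * diagonal (fun ω => f (c * ω)) := by
  ext τ ω
  by_cases h : τ = c * ω <;> simp [shiftMatrix, h]

lemma commute_shiftMatrix_diagonal {f : G → R} {c : G} (hf : ∀ ω, f (c * ω) = f ω) :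
    Commute (shiftMatrix R c) (diagonal f) := by
  rw [Commute, SemiconjBy, diagonal_mul_shiftMatrix]
  simp only [hf]

lemma diagonal_mul_shiftMatrix_of_neg {R : Type*} [Ring R] {f : G → R} {c : G}
    (hf : ∀ ω, f (c * ω) = -f ω) :
    diagonal f * shiftMatrix R c = -(shiftMatrix R c * diagonal f) := by
  rw [diagonal_mul_shiftMatrix]
  simp only [hf, ← diagonal_neg, mul_neg]

end ShiftMatrix

lemma commute_shiftMatrix_shiftMatrix {G R : Type*} [CommGroup G] [Fintype G] [DecidableEq G]
    [Semiring R] (c d : G) : Commute (shiftMatrix R c) (shiftMatrix R d) := by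
  rw [Commute, SemiconjBy, shiftMatrix_mul_shiftMatrix, shiftMatrix_mul_shiftMatrix, mul_comm]

lemma Matrix.trace_mul_eq_zero_of_anticommute {n R : Type*} [Fintype n] [DecidableEq n]
    [CommRing R] [IsAddTorsionFree R] {U Z M : Matrix n n R} (hU : U * U = 1)
    (hZ : Z * U = -(U * Z)) (hM : Commute U M) : trace (Z * M) = 0 := by
  have hUZU : U * Z * U = -Z := by rw [mul_assoc, hZ, mul_neg, ← mul_assoc, hU, one_mul]
  refine self_eq_neg.mp ?_
  calc trace (Z * M) = trace (Z * M * U * U) := by rw [mul_assoc _ U U, hU, mul_one]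
    _ = trace (U * (Z * M * U)) := trace_mul_comm _ _
    _ = trace (U * Z * U * M) := by rw [mul_assoc Z M U, ← hM.eq]; simp only [mul_assoc]
    _ = -trace (Z * M) := by rw [hUZU, neg_mul, trace_neg]

namespace Toric

variable {m n : ℕ} [NeZero m] [NeZero n]

lemma commute_shiftMatrix_ZA {c : SConf m n} {S : Finset (Edge m n)}
    (hc : ∏ e ∈ S, c e = 1) : Commute (shiftMatrix ℝ c) (ZA m n S) :=
  commute_shiftMatrix_diagonal fun ω => by simp [Finset.prod_mul_distrib, hc]

lemma ZA_mul_shiftMatrix {c : SConf m n} {S : Finset (Edge m n)}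
    (hc : ∏ e ∈ S, c e = -1) : ZA m n S * shiftMatrix ℝ c = -(shiftMatrix ℝ c * ZA m n S) :=
  diagonal_mul_shiftMatrix_of_neg fun ω => by simp [Finset.prod_mul_distrib, hc]

lemma commute_shiftMatrix_H (Jx Jz : Vtx m n → ℝ) {c : SConf m n}
    (hc : ∀ s, ∏ e ∈ starSet m n s, c e = 1) : Commute (shiftMatrix ℝ c) (H m n Jx Jz) := by
  -- `X m n p` and `Z m n s` are definitionally `shiftMatrix ℝ (xconf m n p)` and
  -- `ZA m n (starSet m n s)`.
  refine ((Commute.sum_right _ _ _ fun p _ => ?_).neg_right).sub_right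
    (Commute.sum_right _ _ _ fun s _ => ?_)
  · exact (commute_shiftMatrix_shiftMatrix _ (xconf m n p)).smul_right _
  · exact (commute_shiftMatrix_ZA (hc s)).smul_right _

lemma commute_mexp_right {U M : Mat m n} (h : Commute U M) : Commute U (mexp m n M) :=
  open scoped Matrix.Norms.Operator in h.exp_right

end Toric

theorem toric_code_ZA_vanishes_general (m n : ℕ) [NeZero m] [NeZero n]
    (Jx Jz : Toric.Vtx m n → ℝ)
    (A : Finset (Toric.Edge m n))
    (h : ¬∃ D : Finset (Toric.Vtx m n), Toric.ZA m n A = Toric.ZProd m n D) :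
    Toric.gibbs m n Jx Jz (Toric.ZA m n A) = 0 := by
  obtain ⟨D, hD⟩ | ⟨c, hstar, hA⟩ :=
    exists_prod_eq_prod_prod_or_exists_sign_flip A (Toric.starSet m n)
  · exact absurd ⟨D, congrArg diagonal (funext fun ω => by rw [hD ω])⟩ h
  · have hcc : shiftMatrix ℝ c * shiftMatrix ℝ c = 1 := by
      rw [shiftMatrix_mul_shiftMatrix,
        show c * c = 1 from funext fun e => Int.units_mul_self (c e), shiftMatrix_one]
    rw [Toric.gibbs, trace_mul_eq_zero_of_anticommute hcc (Toric.ZA_mul_shiftMatrix hA)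
      (Toric.commute_mexp_right (Toric.commute_shiftMatrix_H Jx Jz hstar).neg_right), zero_div]

/-- If `Z_A = ∏_{e∈A} σ³_e` is not a product of star
operators (no `D ⊆ V` with `Z_A = ∏_{s∈D} Z_s`), then `⟨Z_A⟩ = 0`. -/
theorem toric_code_ZA_vanishes (m n : ℕ) [NeZero m] [NeZero n]
    (hm : 3 ≤ m) (hn : 3 ≤ n)
    (Jx Jz : Toric.Vtx m n → ℝ) (hJx : ∀ p, 0 ≤ Jx p) (hJz : ∀ s, 0 ≤ Jz s)
    (A : Finset (Toric.Edge m n))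
    (h : ¬∃ D : Finset (Toric.Vtx m n), Toric.ZA m n A = Toric.ZProd m n D) :
    Toric.gibbs m n Jx Jz (Toric.ZA m n A) = 0 :=
  toric_code_ZA_vanishes_general m n Jx Jz A h
end
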